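/- With the same setup of integer paths with steps in {-1,0,1} starting at 0, let M(x)(j) = max_{0 ≤ i ≤ j} x i. Then for every nonnegative integer g, the map 2M - id is invariant under T_g: for all j, 2 * M(T_g(x))(j) - T_g(x)(j) = 2 * M(x)(j) - x(j). -/
import Mathlib


/-- Running maximum `M(x)(j) = max_{0 ≤ i ≤ j} x i`. -/
noncomputable def runMax (x : ℕ → ℤ) (j : ℕ) : ℤ :=
  (Finset.range (j + 1)).sup' (Finset.nonempty_range_iff.mpr (Nat.succ_ne_zero j)) x

/-- Pitman-type transformation `T_g(x)(j) = x j - 2 * (M(x)(j) - g)₊`. -/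
noncomputable def Ttrop (g : ℤ) (x : ℕ → ℤ) (j : ℕ) : ℤ :=
  x j - 2 * max (runMax x j - g) 0

lemma le_runMax (x : ℕ → ℤ) {i j : ℕ} (h : i ≤ j) : x i ≤ runMax x j :=
  Finset.le_sup' x (Finset.mem_range.mpr (Nat.lt_succ_of_le h))

lemma runMax_le (x : ℕ → ℤ) {j : ℕ} {a : ℤ} (h : ∀ i ≤ j, x i ≤ a) : runMax x j ≤ a :=
  Finset.sup'_le _ _ fun i hi => h i (Nat.lt_succ_iff.mp (Finset.mem_range.mp hi))

lemma exists_runMax (x : ℕ → ℤ) (j : ℕ) : ∃ i ≤ j, runMax x j = x i := by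
  obtain ⟨i, hi, h⟩ :=
    Finset.exists_mem_eq_sup' (Finset.nonempty_range_iff.mpr (Nat.succ_ne_zero j)) x
  exact ⟨i, Nat.lt_succ_iff.mp (Finset.mem_range.mp hi), h⟩

/-- Discrete IVT / first hitting time. -/
lemma hit (x : ℕ → ℤ) (hx0 : x 0 = 0)
    (hstep : ∀ j : ℕ, x (j + 1) - x j ∈ ({-1, 0, 1} : Set ℤ))
    {v : ℤ} (hv : 0 ≤ v) {n : ℕ} (hn : v ≤ x n) :
    ∃ i ≤ n, x i = v ∧ ∀ k < i, x k < v := by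
  classical
  have hex : ∃ i, v ≤ x i := ⟨n, hn⟩
  have h1 : v ≤ x (Nat.find hex) := Nat.find_spec hex
  have h2 : ∀ k < Nat.find hex, x k < v := fun k hk => lt_of_not_ge (Nat.find_min hex hk)
  refine ⟨Nat.find hex, Nat.find_min' hex hn, ?_, h2⟩
  rcases hm : Nat.find hex with _ | m
  · rw [hm] at h1; omega
  · rw [hm] at h1 h2
    have hlt := h2 m (Nat.lt_succ_self m)
    have hs := hstep m
    simp only [Set.mem_insert_iff, Set.mem_singleton_iff] at hs
    omega

lemma runMax_Ttrop (x : ℕ → ℤ) (hx0 : x 0 = 0)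
    (hstep : ∀ j : ℕ, x (j + 1) - x j ∈ ({-1, 0, 1} : Set ℤ))
    (g : ℤ) (hg : 0 ≤ g) (j : ℕ) :
    runMax (Ttrop g x) j = min (runMax x j) g := by
  by_cases h : runMax x j ≤ g
  · have heq : ∀ i ≤ j, Ttrop g x i = x i := by
      intro i hi
      have hle : runMax x i ≤ g :=
        le_trans (runMax_le x fun k hk => le_runMax x (hk.trans hi)) h
      unfold Ttrop; omega
    rw [min_eq_left h]
    refine le_antisymm (runMax_le _ fun i hi => ?_) (runMax_le _ fun i hi => ?_)
    · rw [heq i hi]; exact le_runMax x hi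
    · rw [← heq i hi]; exact le_runMax _ hi
  · push_neg at h
    rw [min_eq_right h.le]
    refine le_antisymm (runMax_le _ fun i _ => ?_) ?_
    · have hxi : x i ≤ runMax x i := le_runMax x le_rfl
      unfold Ttrop; omega
    · obtain ⟨i0, hi0, hM⟩ := exists_runMax x j
      have hgx : g ≤ x i0 := by omega
      obtain ⟨i, hii0, hxi, hlt⟩ := hit x hx0 hstep hg hgx
      have hMi : runMax x i = g := by
        refine le_antisymm (runMax_le x fun k hk => ?_) (hxi ▸ le_runMax x le_rfl)
        rcases lt_or_eq_of_le hk with hk' | hk'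
        · exact (hlt k hk').le
        · rw [hk', hxi]
      have hT : Ttrop g x i = g := by unfold Ttrop; rw [hMi, hxi]; omega
      calc g = Ttrop g x i := hT.symm
        _ ≤ runMax (Ttrop g x) j := le_runMax _ (hii0.trans hi0)

/-- For paths starting at 0 with steps in `{-1,0,1}` and nonnegative integer `g`, the map
`2M - id` is invariant under `T_g`. -/
theorem twoM_sub_id_invariant (x : ℕ → ℤ) (hx0 : x 0 = 0)
    (hstep : ∀ j : ℕ, x (j + 1) - x j ∈ ({-1, 0, 1} : Set ℤ))
    (g : ℤ) (hg : 0 ≤ g) :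
    ∀ j, 2 * runMax (Ttrop g x) j - Ttrop g x j = 2 * runMax x j - x j := by
  intro j
  have hmin := runMax_Ttrop x hx0 hstep g hg j
  have hxle : x j ≤ runMax x j := le_runMax x le_rfl
  rw [hmin]
  unfold Ttrop
  omega
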